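/- arXiv:2602.13107 — 7 statements merged into one kernel-verified Lean document; each statement's English description precedes it below -/
import Mathlib

section
/- Every minimal linear code is intersecting: if every codeword of C is minimal, then any two nonzero codewords of C have intersecting Hamming supports. -/
/-- Every minimal linear code is intersecting. -/
theorem minimal_code_is_intersecting {F : Type*} [Field F] {n : ℕ}
    (C : Submodule F (Fin n → F))
    (hmin : ∀ v ∈ C, ∀ w ∈ C, (∀ i, w i ≠ 0 → v i ≠ 0) → ∃ c : F, w = c • v) :
    ∀ v ∈ C, ∀ w ∈ C, v ≠ 0 → w ≠ 0 →
      ({i | v i ≠ 0} ∩ {i | w i ≠ 0}).Nonempty := by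
  intro v hv w hw hv0 hw0
  by_contra hdisj
  rw [Set.not_nonempty_iff_eq_empty] at hdisj
  have hdis : ∀ i, v i = 0 ∨ w i = 0 := by
    intro i
    by_contra h
    push_neg at h
    have hmem : i ∈ ({i | v i ≠ 0} ∩ {i | w i ≠ 0}) := ⟨h.1, h.2⟩
    rw [hdisj] at hmem
    exact hmem
  have hu : v + w ∈ C := C.add_mem hv hw
  obtain ⟨c, hc⟩ := hmin (v + w) hu v hv (by
    intro i hvi
    have hwi : w i = 0 := (hdis i).resolve_left hvi
    simpa [hwi] using hvi)
  obtain ⟨j, hj⟩ := Function.ne_iff.mp hw0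
  have hvj : v j = 0 := (hdis j).resolve_right hj
  have : v j = c * (v j + w j) := by
    have := congrFun hc j; simpa using this
  rw [hvj, zero_add] at this
  have hc0 : c = 0 := by
    rcases mul_eq_zero.mp this.symm with h | h
    · exact h
    · exact absurd h hj
  apply hv0
  rw [hc, hc0, zero_smul]
end

section
/- If C ≤ F_q^n is a linear intersecting code of dimension k and minimum distance d, then d ≥ k. -/
/-- If C ≤ F_q^n is a linear intersecting code of dimension k and
minimum distance d, then d ≥ k. -/
theorem minDist_ge_dim_of_intersecting {F : Type*} [Field F] [Fintype F] [DecidableEq F]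
    {n d : ℕ} (C : Submodule F (Fin n → F))
    (hd_le : ∀ x ∈ C, x ≠ 0 → d ≤ hammingNorm x)
    (hd_ex : ∃ x ∈ C, x ≠ 0 ∧ hammingNorm x = d)
    (hint : ∀ v ∈ C, ∀ w ∈ C, v ≠ 0 → w ≠ 0 →
      ({i | v i ≠ 0} ∩ {i | w i ≠ 0}).Nonempty) :
    Module.finrank F C ≤ d := by
  obtain ⟨x, hxC, hx0, hxd⟩ := hd_ex
  set S : Finset (Fin n) := {i | x i ≠ 0} with hS
  let f : C →ₗ[F] (S → F) :=
    { toFun := fun v i => (v : Fin n → F) i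
      map_add' := fun a b => rfl
      map_smul' := fun c a => rfl }
  have hinj : Function.Injective f := by
    rw [injective_iff_map_eq_zero]
    intro v hv
    by_contra hv0
    have hvC := v.2
    have hvne : (v : Fin n → F) ≠ 0 := by
      exact fun h => hv0 (Subtype.ext h)
    obtain ⟨i, hi⟩ := hint x hxC v hvC hx0 hvne
    have hiS : i ∈ S := by
      simp [hS, Finset.mem_filter]
      exact hi.1
    have : f v ⟨i, hiS⟩ = 0 := by rw [hv]; rfl
    exact hi.2 this
  calc Module.finrank F C ≤ Module.finrank F (S → F) :=
        LinearMap.finrank_le_finrank_of_injective hinj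
    _ = S.card := by simp [Module.finrank_pi]
    _ = d := hxd
end

section
/- A matroid M = (E, r) has a vertical t-separation for some t ≤ r(M) − 1 if and only if M has two disjoint cocircuits. -/
/-- Auxiliary: any set satisfying a predicate contains a minimal subset satisfying it. -/
lemma exists_min_subset {α : Type*} [DecidableEq α] (P : Finset α → Prop) [DecidablePred P]
    (S : Finset α) (hS : P S) : ∃ C, C ⊆ S ∧ P C ∧ ∀ Y ⊂ C, ¬ P Y := by
  obtain ⟨C, hC, hmin⟩ := Finset.exists_min_image (S.powerset.filter P) Finset.card
    ⟨S, by simp [hS]⟩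
  simp only [Finset.mem_filter, Finset.mem_powerset] at hC
  refine ⟨C, hC.1, hC.2, fun Y hY hPY => ?_⟩
  have := hmin Y (by
    simp only [Finset.mem_filter, Finset.mem_powerset]
    exact ⟨hY.subset.trans hC.1, hPY⟩)
  exact absurd this (not_le.mpr (Finset.card_lt_card hY))

/-- A matroid M = (E,r) has a vertical t-separation for some
t ≤ r(M) − 1 iff M has two disjoint cocircuits.  Here the dual rank is
r*(X) = |X| + r(Xᶜ) − r(E), a cocircuit is a circuit of the dual (a minimal
dual-dependent set), λ_M(X) = r(X) + r(Xᶜ) − r(E), and (X, Xᶜ) is a vertical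
t-separation if λ_M(X) < t and min{r(X), r(Xᶜ)} ≥ t. -/
theorem vertical_separation_iff_disjoint_cocircuits {E : Type*} [Fintype E] [DecidableEq E]
    (r : Finset E → ℕ)
    (hR1 : ∀ A : Finset E, r A ≤ A.card)
    (hR2 : ∀ A B : Finset E, A ⊆ B → r A ≤ r B)
    (hR3 : ∀ A B : Finset E, r (A ∩ B) + r (A ∪ B) ≤ r A + r B) :
    (∃ t : ℕ, t + 1 ≤ r Finset.univ ∧ ∃ X : Finset E,
        t ≤ min (r X) (r Xᶜ) ∧ r X + r Xᶜ - r Finset.univ < t)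
    ↔ (∃ C₁ C₂ : Finset E, Disjoint C₁ C₂ ∧
        (C₁.card + r C₁ᶜ - r Finset.univ < C₁.card ∧
          ∀ Y ⊂ C₁, Y.card + r Yᶜ - r Finset.univ = Y.card) ∧
        (C₂.card + r C₂ᶜ - r Finset.univ < C₂.card ∧
          ∀ Y ⊂ C₂, Y.card + r Yᶜ - r Finset.univ = Y.card)) := by
  classical
  have hr0 : r ∅ = 0 := Nat.le_zero.mp (by simpa using hR1 ∅)
  -- submodularity applied to a set and its complement
  have hsub : ∀ X : Finset E, r Finset.univ ≤ r X + r Xᶜ := by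
    intro X
    have h := hR3 X Xᶜ
    simpa [Finset.inter_compl, Finset.union_compl, hr0] using h
  have hle_univ : ∀ X : Finset E, r X ≤ r Finset.univ :=
    fun X => hR2 X Finset.univ (Finset.subset_univ X)
  constructor
  · rintro ⟨t, htU, X, hmin, hlam⟩
    obtain ⟨htX, htXc⟩ := le_min_iff.mp hmin
    have hs := hsub X
    have hXlt : r X < r Finset.univ := by omega
    have hXclt : r Xᶜ < r Finset.univ := by omega
    -- extract minimal dual-dependent subsets
    obtain ⟨C₁, hC₁sub, hPC₁, hminC₁⟩ :=
      exists_min_subset (fun C : Finset E => r Cᶜ < r Finset.univ) Xᶜ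
        (by simpa using hXlt)
    obtain ⟨C₂, hC₂sub, hPC₂, hminC₂⟩ :=
      exists_min_subset (fun C : Finset E => r Cᶜ < r Finset.univ) X hXclt
    have hdisj : Disjoint C₁ C₂ :=
      (disjoint_compl_left (a := X)).mono hC₁sub hC₂sub
    have hne₁ : C₁.Nonempty := by
      rcases C₁.eq_empty_or_nonempty with rfl | h
      · simp at hPC₁
      · exact h
    have hne₂ : C₂.Nonempty := by
      rcases C₂.eq_empty_or_nonempty with rfl | h
      · simp at hPC₂
      · exact h
    have hcard₁ : 1 ≤ C₁.card := Finset.card_pos.mpr hne₁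
    have hcard₂ : 1 ≤ C₂.card := Finset.card_pos.mpr hne₂
    refine ⟨C₁, C₂, hdisj, ⟨by omega, fun Y hY => ?_⟩, ⟨by omega, fun Y hY => ?_⟩⟩
    · have h1 := hminC₁ Y hY
      have h2 := hle_univ Yᶜ
      omega
    · have h1 := hminC₂ Y hY
      have h2 := hle_univ Yᶜ
      omega
  · rintro ⟨C₁, C₂, hdisj, ⟨hdep₁, hmin₁⟩, ⟨hdep₂, hmin₂⟩⟩
    have hne₁ : C₁.Nonempty := by
      rcases C₁.eq_empty_or_nonempty with rfl | h
      · simp at hdep₁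
      · exact h
    have hne₂ : C₂.Nonempty := by
      rcases C₂.eq_empty_or_nonempty with rfl | h
      · simp at hdep₂
      · exact h
    have hlt₁ : r C₁ᶜ < r Finset.univ := by
      have := hR1 C₁; omega
    have hlt₂ : r C₂ᶜ < r Finset.univ := by
      have := hR1 C₂; omega
    -- r (Cᶜ) = r(univ) - 1 for a cocircuit C
    have key : ∀ C : Finset E, C.Nonempty → r Cᶜ < r Finset.univ →
        (∀ Y ⊂ C, Y.card + r Yᶜ - r Finset.univ = Y.card) →
        r Cᶜ + 1 = r Finset.univ := by
      intro C hne hlt hmin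
      obtain ⟨e, he⟩ := hne
      have hY : C.erase e ⊂ C := Finset.erase_ssubset he
      have h1 := hmin _ hY
      have hYc : (C.erase e)ᶜ = insert e Cᶜ := by
        ext x
        simp only [Finset.mem_compl, Finset.mem_erase, Finset.mem_insert]
        by_cases hx : x = e <;> simp [hx, he]
      have h2 : r ((C.erase e)ᶜ) = r Finset.univ := by
        have hle := hle_univ ((C.erase e)ᶜ)
        rcases Finset.eq_empty_or_nonempty (C.erase e) with hemp | hne'
        · rw [hemp]; simp
        · have hcardpos : 1 ≤ (C.erase e).card := Finset.card_pos.mpr hne'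
          omega
      -- rank increases by at most 1 when inserting an element
      have h3 : r (insert e Cᶜ) ≤ r Cᶜ + 1 := by
        have hsm := hR3 Cᶜ {e}
        have h1e : r {e} ≤ 1 := by simpa using hR1 {e}
        have : Cᶜ ∪ {e} = insert e Cᶜ := by
          ext x; simp [or_comm]
        rw [this] at hsm
        omega
      rw [hYc] at h2
      omega
    have hkey₁ := key C₁ hne₁ hlt₁ hmin₁
    have hkey₂ := key C₂ hne₂ hlt₂ hmin₂
    -- r C₁ ≥ 1
    have hrC₁pos : 1 ≤ r C₁ := by
      have := hsub C₁; omega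
    -- C₁ ⊆ C₂ᶜ, so r C₁ ≤ r C₂ᶜ = r univ - 1
    have hsubc : C₁ ⊆ C₂ᶜ := by
      intro x hx
      simp only [Finset.mem_compl]
      exact Finset.disjoint_left.mp hdisj hx
    have hrC₁le : r C₁ ≤ r C₂ᶜ := hR2 _ _ hsubc
    refine ⟨r C₁, by omega, C₁ᶜ, ?_, ?_⟩
    · rw [compl_compl]
      exact le_min (by omega) le_rfl
    · rw [compl_compl]
      omega
end

section
/- A codeword x of a linear code C ≤ F_q^n is minimal if and only if its Hamming support σ(x) is a cocircuit of the matroid associated to C. -/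
/-!
The codewords are the vectors `y ᵥ* G`, so those vanishing outside `A` form the kernel of
restricting the code to the coordinates in `Aᶜ`. Since column rank equals row rank, the column
rank of `Aᶜ` is the dimension of that restricted code; hence `r(Aᶜ) = r(E)`, i.e. `A` is
coindependent, exactly when no nonzero codeword is supported in `A`. A cocircuit is thus a minimal support of a nonzero
codeword, and `σ(x)` is one exactly when every codeword supported in it is a multiple of `x`:
otherwise a suitable `w - c • x` is nonzero with smaller support.
-/

open Module Matrix

theorem Submodule.finrank_map_eq_iff_disjoint_ker {K V W : Type*} [DivisionRing K]
    [AddCommGroup V] [Module K V] [AddCommGroup W] [Module K W]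
    (f : V →ₗ[K] W) (C : Submodule K V) [FiniteDimensional K C] :
    finrank K (C.map f) = finrank K C ↔ Disjoint C (LinearMap.ker f) := by
  rw [← LinearMap.injective_domRestrict_iff, ← LinearMap.ker_eq_bot,
    ← Submodule.finrank_eq_zero, ← LinearMap.range_domRestrict,
    ← (f.domRestrict C).finrank_range_add_finrank_ker]
  omega

section ColumnRank

variable {F : Type*} [Field F] {m ι : Type*} [Finite m]

theorem finrank_span_col_image_eq_finrank_map_funLeft (G : Matrix m ι F) (A : Finset ι) :
    finrank F (Submodule.span F (G.col '' A)) =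
      finrank F ((Submodule.span F (Set.range G.row)).map
        (LinearMap.funLeft F F ((↑) : A → ι))) := by
  set M := G.submatrix id ((↑) : A → ι)
  have hcols : Set.range M.col = G.col '' A := by
    rw [Set.image_eq_range]; rfl
  have hrows : Set.range M.row = LinearMap.funLeft F F ((↑) : A → ι) '' Set.range G.row := by
    rw [← Set.range_comp]; rfl
  rw [← hcols, Submodule.map_span, ← hrows, ← Matrix.rank_eq_finrank_span_row,
    ← Matrix.rank_eq_finrank_span_cols]

variable [Fintype ι]

theorem finrank_span_col_univ (G : Matrix m ι F) :
    finrank F (Submodule.span F (G.col '' (Finset.univ : Finset ι))) =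
      finrank F (Submodule.span F (Set.range G.row)) := by
  rw [Finset.coe_univ, Set.image_univ, ← Matrix.rank_eq_finrank_span_row,
    Matrix.rank_eq_finrank_span_cols]

theorem mem_ker_funLeft_compl_iff [DecidableEq ι] {A : Finset ι} {w : ι → F} :
    w ∈ LinearMap.ker (LinearMap.funLeft F F ((↑) : ↥(Aᶜ : Finset ι) → ι)) ↔
      ∀ i, w i ≠ 0 → i ∈ A := by
  simp only [LinearMap.mem_ker, funext_iff, LinearMap.funLeft_apply, Pi.zero_apply,
    Subtype.forall, Finset.mem_compl]
  exact forall_congr' fun i => not_imp_comm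

theorem finrank_span_col_compl_eq_iff [DecidableEq ι] (G : Matrix m ι F) (A : Finset ι) :
    finrank F (Submodule.span F (G.col '' ↑(Aᶜ : Finset ι))) =
        finrank F (Submodule.span F (G.col '' (Finset.univ : Finset ι))) ↔
      ∀ w ∈ Submodule.span F (Set.range G.row), (∀ i, w i ≠ 0 → i ∈ A) → w = 0 := by
  rw [finrank_span_col_image_eq_finrank_map_funLeft, finrank_span_col_univ,
    Submodule.finrank_map_eq_iff_disjoint_ker, Submodule.disjoint_def]
  simp only [mem_ker_funLeft_compl_iff]

end ColumnRank

section DualRank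

variable {ι : Type*} [Fintype ι] [DecidableEq ι] {r : Finset ι → ℕ}

theorem card_add_rank_compl_sub_eq_card_iff (hle : ∀ A, r A ≤ r Finset.univ) (A : Finset ι) :
    A.card + r Aᶜ - r Finset.univ = A.card ↔ r Aᶜ = r Finset.univ := by
  rcases A.eq_empty_or_nonempty with rfl | hA
  · simp
  · have := hle Aᶜ
    have := hA.card_pos
    omega

theorem card_add_rank_compl_sub_lt_card_iff (hle : ∀ A, r A ≤ r Finset.univ) (A : Finset ι) :
    A.card + r Aᶜ - r Finset.univ < A.card ↔ A.Nonempty ∧ r Aᶜ ≠ r Finset.univ := by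
  have := hle Aᶜ
  rw [← Finset.card_pos]
  omega

end DualRank

theorem minimal_iff_forall_ssubset_support {F ι : Type*} [Field F] [Fintype ι] [DecidableEq ι]
    [DecidableEq F] {C : Submodule F (ι → F)} {x : ι → F} (hx : x ∈ C) (hx0 : x ≠ 0) :
    (∀ w ∈ C, (∀ i, w i ≠ 0 → x i ≠ 0) → ∃ c : F, w = c • x) ↔
      ∀ Y ⊂ Finset.univ.filter (fun i => x i ≠ 0),
        ∀ w ∈ C, (∀ i, w i ≠ 0 → i ∈ Y) → w = 0 := by
  constructor
  · rintro hmin Y hY w hw hwY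
    obtain ⟨c, rfl⟩ := hmin w hw fun i hi => by simpa using hY.subset (hwY i hi)
    obtain ⟨i, hiS, hiY⟩ := Finset.exists_of_ssubset hY
    have hxi : x i ≠ 0 := by simpa using hiS
    have hc : c = 0 := by
      by_contra hc
      exact hiY (hwY i (mul_ne_zero hc hxi))
    rw [hc, zero_smul]
  · intro h w hw hwx
    obtain ⟨i₀, hi₀⟩ := Function.ne_iff.mp hx0
    refine ⟨w i₀ / x i₀, sub_eq_zero.mp ?_⟩
    -- `w - (w i₀ / x i₀) • x` vanishes at `i₀` and outside the support of `x`
    refine h ((Finset.univ.filter _).erase i₀) (Finset.erase_ssubset (by simpa using hi₀)) _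
      (C.sub_mem hw (C.smul_mem _ hx)) fun i hi => ?_
    have hxi : x i ≠ 0 := fun hxi => hi (by simp [hxi, not_imp_not.mp (hwx i) hxi])
    refine Finset.mem_erase.mpr ⟨?_, by simpa using hxi⟩
    rintro rfl
    exact hi (by simp [div_mul_cancel₀ _ hi₀])

/-- A nonzero codeword x of a linear code C ≤ F_q^n is minimal if
and only if its Hamming support is a cocircuit of the matroid associated to C
(the column matroid of a generator matrix G, with r(A) the rank of the columns
indexed by A; cocircuits are circuits of the dual, which has rank function
r*(X) = |X| + r(Xᶜ) − r(E)). -/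
theorem minimal_codeword_iff_support_cocircuit {F : Type*} [Field F] [DecidableEq F]
    {n k : ℕ} (C : Submodule F (Fin n → F)) (G : Matrix (Fin k) (Fin n) F)
    (hG : Submodule.span F (Set.range G) = C)
    (r : Finset (Fin n) → ℕ)
    (hr : ∀ A : Finset (Fin n),
      r A = Module.finrank F (Submodule.span F
        ((fun j : Fin n => fun i : Fin k => G i j) '' (A : Set (Fin n)))))
    (x : Fin n → F) (hx : x ∈ C) (hx0 : x ≠ 0) :
    (∀ w ∈ C, (∀ i, w i ≠ 0 → x i ≠ 0) → ∃ c : F, w = c • x)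
    ↔ ((Finset.univ.filter fun i => x i ≠ 0).card
          + r (Finset.univ.filter fun i => x i ≠ 0)ᶜ - r Finset.univ
        < (Finset.univ.filter fun i => x i ≠ 0).card ∧
      ∀ Y ⊂ (Finset.univ.filter fun i => x i ≠ 0),
        Y.card + r Yᶜ - r Finset.univ = Y.card) := by
  subst hG
  set S := Finset.univ.filter fun i => x i ≠ 0
  have hle : ∀ A, r A ≤ r Finset.univ := fun A => by
    rw [hr, hr]
    exact Submodule.finrank_mono (Submodule.span_mono (Set.image_mono (by simp)))
  have hspan : ∀ A, r Aᶜ = r Finset.univ ↔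
      ∀ w ∈ Submodule.span F (Set.range G), (∀ i, w i ≠ 0 → i ∈ A) → w = 0 := fun A => by
    rw [hr, hr]
    exact finrank_span_col_compl_eq_iff G A
  have hS : S.Nonempty := by
    obtain ⟨i, hi⟩ := Function.ne_iff.mp hx0
    exact ⟨i, by simpa [S] using hi⟩
  have hS_not_coindep : r Sᶜ ≠ r Finset.univ :=
    fun h => hx0 ((hspan S).mp h x hx fun i hi => by simpa [S] using hi)
  rw [card_add_rank_compl_sub_lt_card_iff hle, minimal_iff_forall_ssubset_support hx hx0]
  simp only [card_add_rank_compl_sub_eq_card_iff hle, hspan]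
  exact (and_iff_right ⟨hS, hS_not_coindep⟩).symm
end

section
/- A linear code C ≤ F_q^n is intersecting if and only if the vertical connectivity of its associated matroid equals dim(C), i.e. the matroid has no vertical j-separation for any j ∈ {1, …, dim(C)−1}. -/
/-!
The rank of a set `X` of coordinates in the matroid of `C` is the dimension of the restricted code
`C|X`, and by rank–nullity `dim C|X < dim C` exactly when some nonzero codeword vanishes on `X`.
Up to arithmetic, a vertical separation `(X, Xᶜ)` says precisely that both `X` and `Xᶜ` have rank
below `dim C`, i.e. that there are nonzero codewords supported in `Xᶜ` and in `X`: two codewords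
with disjoint supports.
-/

open Module Submodule Matrix

namespace Submodule

variable {K V W : Type*} [DivisionRing K] [AddCommGroup V] [Module K V]
  [AddCommGroup W] [Module K W] (p : Submodule K V) [FiniteDimensional K p] (f : V →ₗ[K] W)

theorem finrank_map_lt_iff : finrank K (p.map f) < finrank K p ↔ ∃ x ∈ p, x ≠ 0 ∧ f x = 0 := by
  have rank_nullity := (f.domRestrict p).finrank_range_add_finrank_ker
  rw [LinearMap.range_domRestrict] at rank_nullity
  rw [← rank_nullity, Nat.lt_add_right_iff_pos, finrank_pos_iff_exists_ne_zero]
  constructor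
  · rintro ⟨⟨⟨x, hx⟩, hker⟩, hne⟩
    exact ⟨x, hx, fun h => hne (by simp [h]), hker⟩
  · rintro ⟨x, hx, hne, hfx⟩
    exact ⟨⟨⟨x, hx⟩, hfx⟩, by simpa [Subtype.ext_iff] using hne⟩

theorem finrank_map_pos_iff : 0 < finrank K (p.map f) ↔ ∃ x ∈ p, f x ≠ 0 := by
  rw [finrank_pos_iff_exists_ne_zero]
  constructor
  · rintro ⟨⟨_, x, hx, rfl⟩, hne⟩
    exact ⟨x, hx, fun h => hne (by simp [h])⟩
  · rintro ⟨x, hx, hne⟩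
    exact ⟨⟨f x, mem_map_of_mem hx⟩, by simpa using hne⟩

end Submodule

theorem exists_vertical_separation_iff {ι : Type*} [Fintype ι] [DecidableEq ι]
    (r : Finset ι → ℕ) (d : ℕ) (hpos : ∀ X, r Xᶜ < d → 0 < r X) :
    (∃ j, 1 ≤ j ∧ j + 1 ≤ d ∧ ∃ X, j ≤ min (r X) (r Xᶜ) ∧ r X + r Xᶜ - d < j) ↔
      ∃ X, r X < d ∧ r Xᶜ < d := by
  constructor
  · rintro ⟨j, -, -, X, hmin, hlt⟩
    exact ⟨X, by omega, by omega⟩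
  · rintro ⟨X, hX, hXc⟩
    have hXpos := hpos X hXc
    have hXcpos := hpos Xᶜ (by rwa [compl_compl])
    exact ⟨r X + r Xᶜ - d + 1, by omega, by omega, X, by omega, by omega⟩

section RestrictCoords

variable {F ι : Type*} [Field F]

/-- The code `C|X` obtained by deleting the coordinates outside `X`. -/
def restrictCoords (C : Submodule F (ι → F)) (X : Finset ι) : Submodule F (X → F) :=
  C.map (LinearMap.funLeft F F ((↑) : X → ι))

-- Row rank equals column rank, for the columns of `G` indexed by `X`.
theorem finrank_span_cols_eq_finrank_restrictCoords {m : Type*} [Fintype m]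
    (G : Matrix m ι F) (X : Finset ι) :
    finrank F (span F (G.col '' X)) = finrank F (restrictCoords (span F (Set.range G.row)) X) := by
  set H : Matrix X m F := Gᵀ.submatrix (↑) id
  have rows : G.col '' X = Set.range H.row := Set.image_eq_range _ _
  have cols : restrictCoords (span F (Set.range G.row)) X = span F (Set.range H.col) := by
    rw [restrictCoords, map_span, ← Set.range_comp]; rfl
  rw [rows, cols, ← Matrix.rank_eq_finrank_span_row, Matrix.rank_eq_finrank_span_cols]

theorem finrank_restrictCoords_univ [Fintype ι] (C : Submodule F (ι → F)) :
    finrank F (restrictCoords C Finset.univ) = finrank F C :=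
  (equivMapOfInjective _ (LinearMap.funLeft_injective_of_surjective _ _ _
    fun i => ⟨⟨i, Finset.mem_univ i⟩, rfl⟩) C).finrank_eq.symm

theorem funLeft_val_eq_zero_iff (X : Finset ι) (c : ι → F) :
    LinearMap.funLeft F F ((↑) : X → ι) c = 0 ↔ ∀ i ∈ X, c i = 0 := by
  simp [funext_iff, LinearMap.funLeft_apply]

theorem finrank_restrictCoords_lt_iff [Finite ι] (C : Submodule F (ι → F)) (X : Finset ι) :
    finrank F (restrictCoords C X) < finrank F C ↔ ∃ c ∈ C, c ≠ 0 ∧ ∀ i ∈ X, c i = 0 := by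
  rw [restrictCoords, finrank_map_lt_iff]
  simp only [funLeft_val_eq_zero_iff]

theorem finrank_restrictCoords_pos_of_compl_lt [Fintype ι] [DecidableEq ι]
    (C : Submodule F (ι → F)) (X : Finset ι) (h : finrank F (restrictCoords C Xᶜ) < finrank F C) :
    0 < finrank F (restrictCoords C X) := by
  obtain ⟨c, hcC, hc0, hcXc⟩ := (finrank_restrictCoords_lt_iff C Xᶜ).mp h
  obtain ⟨i, hi⟩ := Function.ne_iff.mp hc0
  have hiX : i ∈ X := by_contra fun hiX => hi (hcXc i (Finset.mem_compl.mpr hiX))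
  exact (finrank_map_pos_iff _ _).mpr ⟨c, hcC, fun h0 => hi (congrFun h0 ⟨i, hiX⟩)⟩

theorem exists_disjoint_supports_iff [Fintype ι] [DecidableEq ι] (C : Submodule F (ι → F)) :
    (∃ v ∈ C, ∃ w ∈ C, v ≠ 0 ∧ w ≠ 0 ∧ Disjoint (Function.support v) (Function.support w)) ↔
      ∃ X : Finset ι, finrank F (restrictCoords C X) < finrank F C ∧
        finrank F (restrictCoords C Xᶜ) < finrank F C := by
  simp only [finrank_restrictCoords_lt_iff, Finset.mem_compl]
  constructor
  · rintro ⟨v, hvC, w, hwC, hv0, hw0, hdisj⟩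
    classical
    refine ⟨Finset.univ.filter (v · ≠ 0), ⟨w, hwC, hw0, ?_⟩, ⟨v, hvC, hv0, ?_⟩⟩
    · intro i hi
      exact Function.notMem_support.mp fun hwi =>
        hdisj.notMem_of_mem_left (Finset.mem_filter.mp hi).2 hwi
    · intro i hi
      simpa using hi
  · rintro ⟨X, ⟨w, hwC, hw0, hwX⟩, ⟨v, hvC, hv0, hvX⟩⟩
    refine ⟨v, hvC, w, hwC, hv0, hw0, Set.disjoint_left.mpr fun i hvi hwi => ?_⟩
    by_cases hi : i ∈ X
    · exact hwi (hwX i hi)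
    · exact hvi (hvX i hi)

end RestrictCoords

theorem intersecting_iff_full_vertical_connectivity_general {F : Type*} [Field F]
    {n k : ℕ} (C : Submodule F (Fin n → F)) (G : Matrix (Fin k) (Fin n) F)
    (hG : Submodule.span F (Set.range G) = C)
    (r : Finset (Fin n) → ℕ)
    (hr : ∀ A : Finset (Fin n),
      r A = Module.finrank F (Submodule.span F
        ((fun j : Fin n => fun i : Fin k => G i j) '' (A : Set (Fin n))))) :
    (∀ v ∈ C, ∀ w ∈ C, v ≠ 0 → w ≠ 0 →
        ({i | v i ≠ 0} ∩ {i | w i ≠ 0}).Nonempty)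
    ↔ (∀ j : ℕ, 1 ≤ j → j + 1 ≤ Module.finrank F C →
        ¬ ∃ X : Finset (Fin n),
            j ≤ min (r X) (r Xᶜ) ∧ r X + r Xᶜ - r Finset.univ < j) := by
  have hr' (X : Finset (Fin n)) : r X = finrank F (restrictCoords C X) :=
    (hr X).trans (hG ▸ finrank_span_cols_eq_finrank_restrictCoords G X)
  have hpos (X : Finset (Fin n)) (hXc : r Xᶜ < finrank F C) : 0 < r X := by
    simp only [hr'] at hXc ⊢
    exact finrank_restrictCoords_pos_of_compl_lt C X hXc
  rw [hr', finrank_restrictCoords_univ]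
  calc _ ↔ ¬ ∃ v ∈ C, ∃ w ∈ C, v ≠ 0 ∧ w ≠ 0 ∧
        Disjoint (Function.support v) (Function.support w) := by
        simp [Set.disjoint_iff_inter_eq_empty, ← Set.not_nonempty_iff_eq_empty, Function.support]
    _ ↔ ¬ ∃ X : Finset (Fin n), r X < finrank F C ∧ r Xᶜ < finrank F C := by
        simp only [hr', exists_disjoint_supports_iff]
    _ ↔ _ := by
        rw [← exists_vertical_separation_iff r _ hpos]
        simp only [not_exists, not_and]

/-- A linear code C ≤ F_q^n is intersecting if and only if the
vertical connectivity of its associated matroid equals dim C, i.e. the matroid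
has no vertical j-separation for any j ∈ {1, …, dim C − 1}. -/
theorem intersecting_iff_full_vertical_connectivity {F : Type*} [Field F] [DecidableEq F]
    {n k : ℕ} (C : Submodule F (Fin n → F)) (G : Matrix (Fin k) (Fin n) F)
    (hG : Submodule.span F (Set.range G) = C)
    (r : Finset (Fin n) → ℕ)
    (hr : ∀ A : Finset (Fin n),
      r A = Module.finrank F (Submodule.span F
        ((fun j : Fin n => fun i : Fin k => G i j) '' (A : Set (Fin n))))) :
    (∀ v ∈ C, ∀ w ∈ C, v ≠ 0 → w ≠ 0 →
        ({i | v i ≠ 0} ∩ {i | w i ≠ 0}).Nonempty)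
    ↔ (∀ j : ℕ, 1 ≤ j → j + 1 ≤ Module.finrank F C →
        ¬ ∃ X : Finset (Fin n),
            j ≤ min (r X) (r Xᶜ) ∧ r X + r Xᶜ - r Finset.univ < j) :=
  intersecting_iff_full_vertical_connectivity_general C G hG r hr
end

section
/- The vertical connectivity of the uniform q-matroid U_{k,n} (with 1 ≤ k ≤ n) is n−k+1 if n ≤ 2k−2, and k otherwise. -/
open Classical in
/-- The vertical connectivity of the uniform q-matroid U_{k,n}
(1 ≤ k ≤ n), with ground space F_q^n and rank function ρ(V) = min{dim V, k},
is n−k+1 if n ≤ 2k−2 and k otherwise. -/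
theorem vertical_connectivity_uniform_qmatroid {F : Type*} [Field F] [Fintype F]
    {n k : ℕ} (hk1 : 1 ≤ k) (hkn : k ≤ n) :
    let ρ : Submodule F (Fin n → F) → ℕ := fun V => min (Module.finrank F V) k
    let sepSet : Set ℕ := {t | ∃ A V : Submodule F (Fin n → F),
      A ⊓ V = ⊥ ∧ A ⊔ V = ⊤ ∧ t ≤ min (ρ A) (ρ V) ∧ ρ A + ρ V < ρ ⊤ + t}
    (if sepSet.Nonempty then sInf sepSet else ρ ⊤)
      = if n ≤ 2 * k - 2 then n - k + 1 else k := by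
  intro ρ sepSet
  have hfin : Module.finrank F (Fin n → F) = n := Module.finrank_fin_fun F
  have htop : ρ ⊤ = k := by
    simp only [ρ, finrank_top, hfin, min_eq_right hkn]
  -- general arithmetic fact about any element of sepSet
  have hlow : ∀ t ∈ sepSet, n - k + 1 ≤ t ∧ n ≤ 2 * k - 2 := by
    rintro t ⟨A, V, hinf, hsup, hmin, hsum⟩
    have hcompl : IsCompl A V := ⟨disjoint_iff.mpr hinf, codisjoint_iff.mpr hsup⟩
    have hdim : Module.finrank F A + Module.finrank F V = n := by
      rw [Submodule.finrank_add_eq_of_isCompl hcompl, hfin]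
    rw [htop] at hsum
    simp only [ρ, le_min_iff] at hmin hsum
    omega
  by_cases hcase : n ≤ 2 * k - 2
  · -- construct a separation with t = n - k + 1
    have hmem : n - k + 1 ∈ sepSet := by
      obtain ⟨f, hf⟩ := exists_linearIndependent_of_le_finrank
        (R := F) (M := Fin n → F) (n := n - k + 1) (by omega)
      set A := Submodule.span F (Set.range f) with hA
      have hrA : Module.finrank F A = n - k + 1 := by
        rw [hA, finrank_span_eq_card hf, Fintype.card_fin]
      obtain ⟨V, hV⟩ := A.exists_isCompl
      have hrV : Module.finrank F V = k - 1 := by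
        have := Submodule.finrank_add_eq_of_isCompl hV
        rw [hfin, hrA] at this; omega
      refine ⟨A, V, disjoint_iff.mp hV.disjoint, codisjoint_iff.mp hV.codisjoint, ?_, ?_⟩
      · simp only [ρ, hrA, hrV, le_min_iff, min_le_iff]; omega
      · rw [htop]; simp only [ρ, hrA, hrV]; omega
    rw [if_pos ⟨_, hmem⟩, if_pos hcase]
    exact le_antisymm (Nat.sInf_le hmem)
      (le_csInf ⟨_, hmem⟩ fun t ht => (hlow t ht).1)
  · have hempty : ¬ sepSet.Nonempty := by
      rintro ⟨t, ht⟩; exact hcase (hlow t ht).2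
    rw [if_neg hempty, if_neg hcase, htop]
end

section
/- Let M = (E, ρ) be a q-matroid with vertical connectivity t and (A, V) a vertical t-separation. Fix a basis β = {a₁,…,a_t, v_{t+1},…,v_n} of E with {a_i} a basis of A and {v_j} a basis of V, and define the classical matroid M_cl = (β, r) by r(X) = ρ(⟨X⟩) for X ⊆ β. Then M_cl is a matroid and its vertical connectivity equals that of M. -/
/-!
For `X ⊆ β` the spans `⟨X⟩` and `⟨β \ X⟩` are complementary subspaces, so a vertical
`s`-separation `(X, β \ X)` of the classical matroid is the vertical `s`-separation
`(⟨X⟩, ⟨β \ X⟩)` of the q-matroid, with the same ranks. Hence the orders of classical vertical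
separations form a subset of those of the q-matroid, and this subset contains their minimum `t`,
witnessed by `(A, V) = (⟨a_i⟩, ⟨v_j⟩)`. The axioms of `r` are inherited from those of `ρ` through
`⟨X ∩ Y⟩ ≤ ⟨X⟩ ∩ ⟨Y⟩` and `⟨X ∪ Y⟩ = ⟨X⟩ + ⟨Y⟩`.
-/

open Submodule

section BasisRank

variable {F E ι : Type*} [Field F] [AddCommGroup E] [Module F E]

def basisRank (ρ : Submodule F E → ℕ) (b : Module.Basis ι F E) (X : Finset ι) : ℕ :=
  ρ (span F (b '' X))

variable {ρ : Submodule F E → ℕ} (b : Module.Basis ι F E)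

theorem basisRank_le_card (hR1 : ∀ V : Submodule F E, ρ V ≤ Module.finrank F V) (X : Finset ι) :
    basisRank ρ b X ≤ X.card := by
  classical
  refine (hR1 _).trans ?_
  rw [← Finset.coe_image]
  exact (finrank_span_finset_le_card _).trans Finset.card_image_le

theorem basisRank_mono (hR2 : ∀ V W : Submodule F E, V ≤ W → ρ V ≤ ρ W) :
    Monotone (basisRank ρ b) :=
  fun _ _ hXY => hR2 _ _ (span_mono (Set.image_mono (Finset.coe_subset.2 hXY)))

theorem basisRank_inter_add_union_le [DecidableEq ι]
    (hR2 : ∀ V W : Submodule F E, V ≤ W → ρ V ≤ ρ W)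
    (hR3 : ∀ V W : Submodule F E, ρ (V ⊓ W) + ρ (V ⊔ W) ≤ ρ V + ρ W) (X Y : Finset ι) :
    basisRank ρ b (X ∩ Y) + basisRank ρ b (X ∪ Y) ≤ basisRank ρ b X + basisRank ρ b Y := by
  have hinter : span F (b '' ↑(X ∩ Y)) ≤ span F (b '' X) ⊓ span F (b '' Y) :=
    le_inf (span_mono (Set.image_mono (by simp))) (span_mono (Set.image_mono (by simp)))
  have hunion : span F (b '' ↑(X ∪ Y)) = span F (b '' X) ⊔ span F (b '' Y) := by
    rw [Finset.coe_union, Set.image_union, span_union]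
  calc basisRank ρ b (X ∩ Y) + basisRank ρ b (X ∪ Y)
      ≤ ρ (span F (b '' X) ⊓ span F (b '' Y)) + ρ (span F (b '' X) ⊔ span F (b '' Y)) := by
        unfold basisRank
        rw [hunion]
        exact Nat.add_le_add_right (hR2 _ _ hinter) _
    _ ≤ basisRank ρ b X + basisRank ρ b Y := hR3 _ _

theorem basisRank_univ [Fintype ι] : basisRank ρ b Finset.univ = ρ ⊤ := by
  rw [basisRank, Finset.coe_univ, Set.image_univ, b.span_eq]

theorem Module.Basis.isCompl_span_image_compl [Fintype ι] [DecidableEq ι] (X : Finset ι) :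
    IsCompl (span F (b '' X)) (span F (b '' ↑Xᶜ)) := by
  rw [Finset.coe_compl]
  exact b.linearIndependent.isCompl_span_image b.span_eq isCompl_compl

theorem rank_top_le_basisRank_add_basisRank_compl [Fintype ι] [DecidableEq ι]
    (hR3 : ∀ V W : Submodule F E, ρ (V ⊓ W) + ρ (V ⊔ W) ≤ ρ V + ρ W) (X : Finset ι) :
    ρ ⊤ ≤ basisRank ρ b X + basisRank ρ b Xᶜ := by
  have hc := b.isCompl_span_image_compl X
  have := hR3 (span F (b '' X)) (span F (b '' ↑Xᶜ))
  rw [hc.inf_eq_bot, hc.sup_eq_top] at this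
  exact le_of_add_le_right this

end BasisRank

section Sum

variable {F E ι κ : Type*} [Field F] [AddCommGroup E] [Module F E] [Fintype ι] [DecidableEq ι]
  [DecidableEq κ] {ρ : Submodule F E → ℕ} (b : Module.Basis (ι ⊕ κ) F E)

theorem basisRank_range_inl :
    basisRank ρ b (Set.range Sum.inl).toFinset = ρ (span F (Set.range (b ∘ Sum.inl))) := by
  rw [basisRank, Set.coe_toFinset, ← Set.range_comp]

theorem basisRank_compl_range_inl [Fintype κ] :
    basisRank ρ b (Set.range Sum.inl).toFinsetᶜ = ρ (span F (Set.range (b ∘ Sum.inr))) := by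
  rw [basisRank, Finset.coe_compl, Set.coe_toFinset, Set.compl_range_inl, ← Set.range_comp]

end Sum

theorem ite_sInf_eq_of_subset {S T : Set ℕ} [Decidable S.Nonempty] [Decidable T.Nonempty]
    {t d d' : ℕ} (hST : S ⊆ T) (ht : t ∈ S) (hT : (if T.Nonempty then sInf T else d) = t) :
    (if S.Nonempty then sInf S else d') = t := by
  have hS : S.Nonempty := ⟨t, ht⟩
  rw [if_pos (hS.mono hST)] at hT
  rw [if_pos hS]
  exact le_antisymm (Nat.sInf_le ht) (hT ▸ csInf_le_csInf (OrderBot.bddBelow T) hS hST)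

def qVerticalSepOrders {F E : Type*} [Field F] [AddCommGroup E] [Module F E]
    (ρ : Submodule F E → ℕ) : Set ℕ :=
  {s | ∃ A V : Submodule F E,
    A ⊓ V = ⊥ ∧ A ⊔ V = ⊤ ∧ s ≤ min (ρ A) (ρ V) ∧ ρ A + ρ V < ρ ⊤ + s}

def verticalSepOrders {α : Type*} [Fintype α] [DecidableEq α] (r : Finset α → ℕ) : Set ℕ :=
  {s | ∃ X : Finset α, s ≤ min (r X) (r Xᶜ) ∧ r X + r Xᶜ - r Finset.univ < s}

theorem verticalSepOrders_basisRank_subset {F E ι : Type*} [Field F] [AddCommGroup E]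
    [Module F E] [Fintype ι] [DecidableEq ι] (ρ : Submodule F E → ℕ) (b : Module.Basis ι F E) :
    verticalSepOrders (basisRank ρ b) ⊆ qVerticalSepOrders ρ := by
  rintro s ⟨X, hmin, hlt⟩
  have hc := b.isCompl_span_image_compl X
  refine ⟨_, _, hc.inf_eq_bot, hc.sup_eq_top, hmin, ?_⟩
  rw [basisRank_univ] at hlt
  exact lt_add_of_tsub_lt_left hlt

open Classical in
/-- Let M = (E, ρ) be a q-matroid with vertical connectivity t and
(A, V) a vertical t-separation.  Fix a basis β = {a₁,…,a_t, v_{t+1},…,v_n} of E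
with the first t elements a basis of A and the rest a basis of V, and define
r(X) = ρ(⟨X⟩) on subsets X of β.  Then (β, r) is a (classical) matroid whose
vertical connectivity equals that of M, namely t. -/
theorem qmatroid_to_matroid_same_vertical_connectivity {F : Type*} [Field F]
    {E : Type*} [AddCommGroup E] [Module F E] [FiniteDimensional F E]
    (ρ : Submodule F E → ℕ)
    (hR1 : ∀ V : Submodule F E, ρ V ≤ Module.finrank F V)
    (hR2 : ∀ V W : Submodule F E, V ≤ W → ρ V ≤ ρ W)
    (hR3 : ∀ V W : Submodule F E, ρ (V ⊓ W) + ρ (V ⊔ W) ≤ ρ V + ρ W)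
    (t : ℕ) (A V : Submodule F E)
    {ι κ : Type*} [Fintype ι] [Fintype κ] [DecidableEq ι] [DecidableEq κ]
    (b : Module.Basis (ι ⊕ κ) F E)
    (hcard : Fintype.card ι = t)
    (hA : A = Submodule.span F (Set.range (⇑b ∘ Sum.inl)))
    (hV : V = Submodule.span F (Set.range (⇑b ∘ Sum.inr)))
    (hsep : A ⊓ V = ⊥ ∧ A ⊔ V = ⊤ ∧ t ≤ min (ρ A) (ρ V) ∧ ρ A + ρ V < ρ ⊤ + t)
    (hκ : (let qSepSet : Set ℕ := {s | ∃ A' V' : Submodule F E,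
        A' ⊓ V' = ⊥ ∧ A' ⊔ V' = ⊤ ∧ s ≤ min (ρ A') (ρ V') ∧ ρ A' + ρ V' < ρ ⊤ + s}
      (if qSepSet.Nonempty then sInf qSepSet else ρ ⊤)) = t) :
    let r : Finset (ι ⊕ κ) → ℕ := fun X => ρ (Submodule.span F (⇑b '' (X : Set (ι ⊕ κ))))
    (∀ X : Finset (ι ⊕ κ), r X ≤ X.card) ∧
    (∀ X Y : Finset (ι ⊕ κ), X ⊆ Y → r X ≤ r Y) ∧
    (∀ X Y : Finset (ι ⊕ κ), r (X ∩ Y) + r (X ∪ Y) ≤ r X + r Y) ∧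
    (let clSepSet : Set ℕ := {s | ∃ X : Finset (ι ⊕ κ),
        s ≤ min (r X) (r Xᶜ) ∧ r X + r Xᶜ - r Finset.univ < s}
     (if clSepSet.Nonempty then sInf clSepSet else r Finset.univ) = t) := by
  refine ⟨basisRank_le_card b hR1, fun X Y => (basisRank_mono b hR2 ·),
    basisRank_inter_add_union_le b hR2 hR3, ?_⟩
  obtain ⟨-, -, hmin, hlt⟩ := hsep
  subst hA hV
  have hmem : t ∈ verticalSepOrders (basisRank ρ b) := by
    refine ⟨(Set.range Sum.inl).toFinset, ?_, ?_⟩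
    · rwa [basisRank_range_inl, basisRank_compl_range_inl]
    · -- makes the truncated subtraction in the classical condition exact
      have hsub := rank_top_le_basisRank_add_basisRank_compl b hR3 (Set.range Sum.inl).toFinset
      rw [basisRank_range_inl, basisRank_compl_range_inl] at hsub
      rw [basisRank_range_inl, basisRank_compl_range_inl, basisRank_univ]
      omega
  exact ite_sInf_eq_of_subset (verticalSepOrders_basisRank_subset ρ b) hmem hκ
end
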